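/- arXiv:2603.27990 — 4 statements merged into one kernel-verified Lean document; each statement's English description precedes it below -/
import Mathlib

section
/- For every real c > 0 there exist a constant C ≥ 1 and a threshold x₀ such that for all real x ≥ x₀, (1/C)·#(ℬ¹ ∩ [1,x]) ≤ #(ℬ¹ ∩ [1,cx]) ≤ C·#(ℬ¹ ∩ [1,x]). -/
/-- The product `(N+1) ⋯ (N+H)`. -/
def intervalProd (N H : ℕ) : ℕ := ∏ i ∈ Finset.Icc 1 H, (N + i)

/-- `n` is divisible by the square of its largest prime factor. -/
def DivBySqLargestPF (n : ℕ) : Prop :=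
  ∃ p : ℕ, p.Prime ∧ p ∣ n ∧ (∀ q : ℕ, q.Prime → q ∣ n → q ≤ p) ∧ p ^ 2 ∣ n

/-- The interval `{N+1, …, N+H}` is bad. -/
def IsBadInterval (N H : ℕ) : Prop :=
  1 ≤ H ∧ DivBySqLargestPF (intervalProd N H)

/-- `ℬ`: natural numbers contained in at least one bad interval. -/
def badSet : Set ℕ := {n | ∃ N H : ℕ, IsBadInterval N H ∧ N + 1 ≤ n ∧ n ≤ N + H}

/-- `ℬ¹`: natural numbers divisible by the square of their largest prime factor. -/
def badSet1 : Set ℕ := {n | DivBySqLargestPF n}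

/-- The number of elements of `S` in `[1, x]`. -/
noncomputable def countIn (S : Set ℕ) (x : ℝ) : ℕ :=
  Set.ncard {n : ℕ | n ∈ S ∧ 1 ≤ n ∧ (n : ℝ) ≤ x}

attribute [local instance] Classical.propDecidable

open Finset

/-- p-smooth numbers in `[1,y]`. -/
noncomputable def smoothSet (y p : ℕ) : Finset ℕ :=
  (Finset.Icc 1 y).filter (fun s => ∀ q, q.Prime → q ∣ s → q ≤ p)

noncomputable def psi (y p : ℕ) : ℕ := (smoothSet y p).card

noncomputable def primesUpTo (p : ℕ) : Finset ℕ := (Finset.range (p+1)).filter Nat.Prime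

lemma psi_le_self (y p : ℕ) : psi y p ≤ y := by
  have h := Finset.card_filter_le (Finset.Icc 1 y) (fun s => ∀ q, q.Prime → q ∣ s → q ≤ p)
  simpa [psi, smoothSet, Nat.card_Icc] using h

lemma psi_eq_of_le {y p : ℕ} (h : y ≤ p) : psi y p = y := by
  have : smoothSet y p = Finset.Icc 1 y := by
    apply Finset.filter_true_of_mem
    intro s hs q hq hqs
    have hs1 : 1 ≤ s := (Finset.mem_Icc.mp hs).1
    have hs2 : s ≤ y := (Finset.mem_Icc.mp hs).2
    exact le_trans (Nat.le_of_dvd hs1 hqs) (le_trans hs2 h)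
  simp [psi, this, Nat.card_Icc]

lemma one_mem_smoothSet {y p : ℕ} (hy : 1 ≤ y) : 1 ∈ smoothSet y p := by
  simp only [smoothSet, Finset.mem_filter, Finset.mem_Icc]
  refine ⟨⟨le_refl 1, hy⟩, fun q hq hq1 => ?_⟩
  exact absurd (Nat.eq_one_of_dvd_one hq1) hq.ne_one

lemma mem_smoothSet {y p s : ℕ} :
    s ∈ smoothSet y p ↔ (1 ≤ s ∧ s ≤ y) ∧ ∀ q, q.Prime → q ∣ s → q ≤ p := by
  simp [smoothSet, Finset.mem_Icc]

lemma mem_primesUpTo {p q : ℕ} : q ∈ primesUpTo p ↔ q ≤ p ∧ q.Prime := by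
  simp [primesUpTo, Finset.mem_range, Nat.lt_succ_iff, and_comm]

/-- max prime factor of q*t is q, when t is q-smooth. -/
lemma maxPF_eq {q t : ℕ} (hq : q.Prime) (ht : 1 ≤ t)
    (hsm : ∀ r, r.Prime → r ∣ t → r ≤ q) (hne : (q*t).primeFactors.Nonempty) :
    (q*t).primeFactors.max' hne = q := by
  apply le_antisymm
  · apply Finset.max'_le
    intro r hr
    have hrp := Nat.prime_of_mem_primeFactors hr
    have hrd := Nat.dvd_of_mem_primeFactors hr
    rcases (Nat.Prime.dvd_mul hrp).mp hrd with h | h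
    · exact le_of_eq ((Nat.prime_dvd_prime_iff_eq hrp hq).mp h)
    · exact hsm r hrp h
  · apply Finset.le_max'
    refine Nat.mem_primeFactors.mpr ⟨hq, Dvd.intro t rfl, ?_⟩
    exact Nat.mul_ne_zero hq.pos.ne' (by omega)

lemma buchstab_le (Y p : ℕ) :
    psi Y p ≤ 1 + ∑ q ∈ primesUpTo p, psi (Y / q) q := by
  have hsub : smoothSet Y p ⊆
      insert 1 ((primesUpTo p).biUnion fun q => (smoothSet (Y/q) q).image (fun t => q * t)) := by
    intro s hs
    rw [mem_smoothSet] at hs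
    obtain ⟨⟨hs1, hsY⟩, hsm⟩ := hs
    rcases eq_or_lt_of_le hs1 with h1 | h2
    · exact Finset.mem_insert.mpr (Or.inl h1.symm)
    · have hne : s.primeFactors.Nonempty := Nat.nonempty_primeFactors.mpr h2
      set q := s.primeFactors.max' hne with hqdef
      have hqmem := s.primeFactors.max'_mem hne
      have hqp : q.Prime := Nat.prime_of_mem_primeFactors hqmem
      have hqd : q ∣ s := Nat.dvd_of_mem_primeFactors hqmem
      refine Finset.mem_insert.mpr (Or.inr ?_)
      refine Finset.mem_biUnion.mpr ⟨q, mem_primesUpTo.mpr ⟨hsm q hqp hqd, hqp⟩, ?_⟩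
      refine Finset.mem_image.mpr ⟨s / q, ?_, Nat.mul_div_cancel' hqd⟩
      rw [mem_smoothSet]
      refine ⟨⟨?_, Nat.div_le_div_right hsY⟩, fun r hr hrd => ?_⟩
      · exact (Nat.one_le_div_iff hqp.pos).mpr (Nat.le_of_dvd (by omega) hqd)
      · apply Finset.le_max' _ r
        exact Nat.mem_primeFactors.mpr ⟨hr, hrd.trans (Nat.div_dvd_of_dvd hqd), by omega⟩
  calc psi Y p ≤ (insert 1 ((primesUpTo p).biUnion fun q =>
          (smoothSet (Y/q) q).image (fun t => q * t))).card := Finset.card_le_card hsub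
    _ ≤ 1 + ((primesUpTo p).biUnion fun q => (smoothSet (Y/q) q).image (fun t => q * t)).card :=
        le_trans (Finset.card_insert_le _ _) (by omega)
    _ ≤ 1 + ∑ q ∈ primesUpTo p, ((smoothSet (Y/q) q).image (fun t => q * t)).card := by
        exact Nat.add_le_add_left (Finset.card_biUnion_le) 1
    _ ≤ 1 + ∑ q ∈ primesUpTo p, psi (Y / q) q := by
        apply Nat.add_le_add_left
        apply Finset.sum_le_sum
        intro q _
        exact (Finset.card_image_le).trans (le_refl _)

lemma buchstab_ge (y p : ℕ) (hy : 1 ≤ y) :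
    1 + ∑ q ∈ primesUpTo p, psi (y / q) q ≤ psi y p := by
  classical
  -- the sets {1} and images are disjoint subsets of smoothSet y p
  have himg : ∀ q ∈ primesUpTo p, ((smoothSet (y/q) q).image (fun t => q * t)) ⊆
      (smoothSet y p).erase 1 := by
    intro q hq m hm
    obtain ⟨hqle, hqp⟩ := mem_primesUpTo.mp hq
    obtain ⟨t, ht, rfl⟩ := Finset.mem_image.mp hm
    rw [mem_smoothSet] at ht
    obtain ⟨⟨ht1, hty⟩, htsm⟩ := ht
    refine Finset.mem_erase.mpr ⟨?_, ?_⟩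
    · have : 2 ≤ q * t := le_trans hqp.two_le (Nat.le_mul_of_pos_right q (by omega))
      omega
    · rw [mem_smoothSet]
      refine ⟨⟨Nat.mul_pos hqp.pos (by omega), ?_⟩, fun r hr hrd => ?_⟩
      · rw [mul_comm]; exact (Nat.le_div_iff_mul_le hqp.pos).mp hty
      · rcases (Nat.Prime.dvd_mul hr).mp hrd with h | h
        · exact le_trans (le_of_eq ((Nat.prime_dvd_prime_iff_eq hr hqp).mp h)) hqle
        · exact le_trans (htsm r hr h) hqle
  have hdisj : ∀ q1 ∈ primesUpTo p, ∀ q2 ∈ primesUpTo p, q1 ≠ q2 →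
      Disjoint ((smoothSet (y/q1) q1).image (fun t => q1 * t))
               ((smoothSet (y/q2) q2).image (fun t => q2 * t)) := by
    intro q1 hq1 q2 hq2 hne
    rw [Finset.disjoint_left]
    intro m hm1 hm2
    apply hne
    obtain ⟨t1, ht1, hmt1⟩ := Finset.mem_image.mp hm1
    obtain ⟨t2, ht2, hmt2⟩ := Finset.mem_image.mp hm2
    rw [mem_smoothSet] at ht1 ht2
    have hq1p := (mem_primesUpTo.mp hq1).2
    have hq2p := (mem_primesUpTo.mp hq2).2
    have hne1 : (q1*t1).primeFactors.Nonempty := by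
      rw [Nat.nonempty_primeFactors]
      have := hq1p.two_le
      have := ht1.1.1
      nlinarith
    have e1 : (q1*t1).primeFactors.max' hne1 = q1 :=
      maxPF_eq hq1p ht1.1.1 (fun r hr hrd => ht1.2 r hr hrd) hne1
    have hne2 : (q2*t2).primeFactors.Nonempty := by rw [hmt2, ← hmt1] at *; exact hne1
    have e2 : (q2*t2).primeFactors.max' hne2 = q2 :=
      maxPF_eq hq2p ht2.1.1 (fun r hr hrd => ht2.2 r hr hrd) hne2
    rw [← e1, ← e2]
    congr 1
    rw [hmt1, hmt2]
  have hb : ((primesUpTo p).biUnion fun q => (smoothSet (y/q) q).image (fun t => q * t)) ⊆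
      (smoothSet y p).erase 1 := Finset.biUnion_subset.mpr himg
  have hcard : ∑ q ∈ primesUpTo p, psi (y / q) q ≤ ((smoothSet y p).erase 1).card := by
    calc ∑ q ∈ primesUpTo p, psi (y / q) q
        = ∑ q ∈ primesUpTo p, ((smoothSet (y/q) q).image (fun t => q * t)).card := by
          apply Finset.sum_congr rfl
          intro q hq
          rw [Finset.card_image_of_injective _
            (mul_right_injective₀ (mem_primesUpTo.mp hq).2.pos.ne')]
          rfl
      _ = ((primesUpTo p).biUnion fun q => (smoothSet (y/q) q).image (fun t => q * t)).card :=
          (Finset.card_biUnion hdisj).symm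
      _ ≤ ((smoothSet y p).erase 1).card := Finset.card_le_card hb
  have h1 : ((smoothSet y p).erase 1).card + 1 = psi y p := by
    rw [psi, Finset.card_erase_add_one (one_mem_smoothSet hy)]
  omega

lemma div_double_bound {y q : ℕ} (hq : 0 < q) : (2*y+1)/q ≤ 2*(y/q)+1 := by
  have h1 := Nat.div_add_mod y q
  have h2 := Nat.mod_lt y hq
  have h3 : 2*y+1 < (2*(y/q)+1+1)*q := by nlinarith [Nat.mod_lt y hq]
  exact Nat.lt_succ_iff.mp ((Nat.div_lt_iff_lt_mul hq).mpr h3)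

lemma psi_double : ∀ y, 1 ≤ y → ∀ Y p, Y ≤ 2*y+1 → psi Y p ≤ 3 * psi y p := by
  intro y
  induction y using Nat.strong_induction_on with
  | _ y IH =>
    intro hy Y p hY
    rcases lt_or_ge y p with hcase | hcase
    · -- trivial case: p > y
      have h1 : psi y p = y := psi_eq_of_le (le_of_lt hcase)
      have h2 : psi Y p ≤ Y := psi_le_self Y p
      omega
    · -- p ≤ y
      have hkey : ∀ q ∈ primesUpTo p, psi (Y/q) q ≤ 3 * psi (y/q) q := by
        intro q hq
        obtain ⟨hqle, hqp⟩ := mem_primesUpTo.mp hq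
        have hq2 := hqp.two_le
        have hqy : q ≤ y := le_trans hqle hcase
        apply IH (y/q) (Nat.div_lt_self (by omega) (by omega))
            ((Nat.one_le_div_iff hqp.pos).mpr hqy)
        calc Y/q ≤ (2*y+1)/q := Nat.div_le_div_right hY
          _ ≤ 2*(y/q)+1 := div_double_bound hqp.pos
      calc psi Y p ≤ 1 + ∑ q ∈ primesUpTo p, psi (Y / q) q := buchstab_le Y p
        _ ≤ 1 + ∑ q ∈ primesUpTo p, 3 * psi (y / q) q := by
            exact Nat.add_le_add_left (Finset.sum_le_sum hkey) 1
        _ = 1 + 3 * ∑ q ∈ primesUpTo p, psi (y / q) q := by rw [Finset.mul_sum]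
        _ ≤ 3 * (1 + ∑ q ∈ primesUpTo p, psi (y / q) q) := by omega
        _ ≤ 3 * psi y p := Nat.mul_le_mul_left 3 (buchstab_ge y p hy)

noncomputable def Bfin (N : ℕ) : Finset ℕ := (Finset.Icc 1 N).filter DivBySqLargestPF

noncomputable def Bcount (N : ℕ) : ℕ := (Bfin N).card

lemma Bcount_mono {N M : ℕ} (h : M ≤ N) : Bcount M ≤ Bcount N :=
  Finset.card_le_card (Finset.filter_subset_filter _ (Finset.Icc_subset_Icc_right h))

/-- upper: Bcount M ≤ sum of psi over primes up to sqrt M -/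
lemma Bcount_le (M : ℕ) :
    Bcount M ≤ ∑ p ∈ primesUpTo (Nat.sqrt M), psi (M / p^2) p := by
  have hsub : Bfin M ⊆ (primesUpTo (Nat.sqrt M)).biUnion
      (fun p => (smoothSet (M / p^2) p).image (fun s => p^2 * s)) := by
    intro m hm
    obtain ⟨hmIcc, p, hp, hpd, hmax, hp2⟩ := Finset.mem_filter.mp hm
    obtain ⟨hm1, hmM⟩ := Finset.mem_Icc.mp hmIcc
    have hp2le : p^2 ≤ m := Nat.le_of_dvd (by omega) hp2
    have hpsqrt : p ≤ Nat.sqrt M := by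
      rw [Nat.le_sqrt]
      calc p * p = p^2 := (sq p).symm
        _ ≤ m := hp2le
        _ ≤ M := hmM
    refine Finset.mem_biUnion.mpr ⟨p, mem_primesUpTo.mpr ⟨hpsqrt, hp⟩, ?_⟩
    refine Finset.mem_image.mpr ⟨m / p^2, ?_, Nat.mul_div_cancel' hp2⟩
    rw [mem_smoothSet]
    have hppos : 0 < p^2 := pow_pos hp.pos 2
    refine ⟨⟨(Nat.one_le_div_iff hppos).mpr hp2le, Nat.div_le_div_right hmM⟩,
      fun r hr hrd => ?_⟩
    exact hmax r hr (hrd.trans (Nat.div_dvd_of_dvd hp2))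
  calc Bcount M ≤ ((primesUpTo (Nat.sqrt M)).biUnion
      (fun p => (smoothSet (M / p^2) p).image (fun s => p^2 * s))).card :=
        Finset.card_le_card hsub
    _ ≤ ∑ p ∈ primesUpTo (Nat.sqrt M), ((smoothSet (M / p^2) p).image (fun s => p^2 * s)).card :=
        Finset.card_biUnion_le
    _ ≤ ∑ p ∈ primesUpTo (Nat.sqrt M), psi (M / p^2) p :=
        Finset.sum_le_sum (fun p _ => Finset.card_image_le)

/-- lower: sum of psi over any set of primes ≤ Bcount N -/
lemma Bcount_ge (N : ℕ) (P : Finset ℕ) (hP : ∀ p ∈ P, p.Prime) :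
    ∑ p ∈ P, psi (N / p^2) p ≤ Bcount N := by
  have himg : ∀ p ∈ P, ((smoothSet (N/p^2) p).image (fun s => p^2 * s)) ⊆ Bfin N := by
    intro p hp m hm
    have hpp := hP p hp
    obtain ⟨s, hs, rfl⟩ := Finset.mem_image.mp hm
    rw [mem_smoothSet] at hs
    obtain ⟨⟨hs1, hsN⟩, hsm⟩ := hs
    have hppos : 0 < p^2 := pow_pos hpp.pos 2
    have hle : p^2 * s ≤ N := by
      rw [mul_comm]; exact (Nat.le_div_iff_mul_le hppos).mp hsN
    refine Finset.mem_filter.mpr ⟨Finset.mem_Icc.mpr ⟨Nat.mul_pos hppos (by omega), hle⟩,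
      p, hpp, dvd_mul_of_dvd_left (dvd_pow_self p (by omega)) s, fun q hq hqd => ?_,
      Dvd.intro s rfl⟩
    rcases (Nat.Prime.dvd_mul hq).mp hqd with h | h
    · exact le_of_eq ((Nat.prime_dvd_prime_iff_eq hq hpp).mp (hq.dvd_of_dvd_pow h))
    · exact hsm q hq h
  have hdisj : ∀ p1 ∈ P, ∀ p2 ∈ P, p1 ≠ p2 →
      Disjoint ((smoothSet (N/p1^2) p1).image (fun s => p1^2 * s))
               ((smoothSet (N/p2^2) p2).image (fun s => p2^2 * s)) := by
    intro p1 hp1 p2 hp2 hne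
    rw [Finset.disjoint_left]
    intro m hm1 hm2
    apply hne
    obtain ⟨t1, ht1, hmt1⟩ := Finset.mem_image.mp hm1
    obtain ⟨t2, ht2, hmt2⟩ := Finset.mem_image.mp hm2
    rw [mem_smoothSet] at ht1 ht2
    have hq1p := hP p1 hp1
    have hq2p := hP p2 hp2
    have hm1' : m = p1 * (p1 * t1) := by rw [← hmt1]; ring
    have hm2' : m = p2 * (p2 * t2) := by rw [← hmt2]; ring
    have hsm1 : ∀ r, r.Prime → r ∣ p1 * t1 → r ≤ p1 := by
      intro r hr hrd
      rcases (Nat.Prime.dvd_mul hr).mp hrd with h | h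
      · exact le_of_eq ((Nat.prime_dvd_prime_iff_eq hr hq1p).mp h)
      · exact ht1.2 r hr h
    have hsm2 : ∀ r, r.Prime → r ∣ p2 * t2 → r ≤ p2 := by
      intro r hr hrd
      rcases (Nat.Prime.dvd_mul hr).mp hrd with h | h
      · exact le_of_eq ((Nat.prime_dvd_prime_iff_eq hr hq2p).mp h)
      · exact ht2.2 r hr h
    have hpos1 : 1 ≤ p1 * t1 := Nat.mul_pos hq1p.pos (by omega)
    have hne1 : (p1*(p1*t1)).primeFactors.Nonempty := by
      rw [Nat.nonempty_primeFactors]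
      nlinarith [hq1p.two_le]
    have e1 : (p1*(p1*t1)).primeFactors.max' hne1 = p1 := maxPF_eq hq1p hpos1 hsm1 hne1
    have hpos2 : 1 ≤ p2 * t2 := Nat.mul_pos hq2p.pos (by omega)
    have hne2 : (p2*(p2*t2)).primeFactors.Nonempty := by rw [← hm2', hm1'] at *; exact hne1
    have e2 : (p2*(p2*t2)).primeFactors.max' hne2 = p2 := maxPF_eq hq2p hpos2 hsm2 hne2
    rw [← e1, ← e2]
    congr 1
    rw [← hm1', ← hm2']
  calc ∑ p ∈ P, psi (N / p^2) p
      = ∑ p ∈ P, ((smoothSet (N/p^2) p).image (fun s => p^2 * s)).card := by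
        apply Finset.sum_congr rfl
        intro p hp
        rw [Finset.card_image_of_injective _ (mul_right_injective₀ (pow_pos (hP p hp).pos 2).ne')]
        rfl
    _ = (P.biUnion (fun p => (smoothSet (N/p^2) p).image (fun s => p^2 * s))).card :=
        (Finset.card_biUnion hdisj).symm
    _ ≤ Bcount N := Finset.card_le_card (Finset.biUnion_subset.mpr himg)

/-- squares give lower bound for Bcount -/
lemma sqrt_le_Bcount (N : ℕ) : Nat.sqrt N - 1 ≤ Bcount N := by
  have hsub : (Finset.Icc 2 (Nat.sqrt N)).image (fun k => k^2) ⊆ Bfin N := by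
    intro m hm
    obtain ⟨k, hk, rfl⟩ := Finset.mem_image.mp hm
    obtain ⟨hk2, hks⟩ := Finset.mem_Icc.mp hk
    have hkN : k^2 ≤ N := by
      rw [sq]
      exact Nat.le_sqrt.mp hks
    have hne : k.primeFactors.Nonempty := Nat.nonempty_primeFactors.mpr (by omega)
    set p := k.primeFactors.max' hne with hpdef
    have hpmem := k.primeFactors.max'_mem hne
    have hpp := Nat.prime_of_mem_primeFactors hpmem
    have hpd : p ∣ k := Nat.dvd_of_mem_primeFactors hpmem
    refine Finset.mem_filter.mpr ⟨Finset.mem_Icc.mpr ⟨Nat.one_le_two_pow.trans (Nat.pow_le_pow_left hk2 2), hkN⟩,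
      p, hpp, hpd.trans (dvd_pow_self k (by omega)), fun q hq hqd => ?_, pow_dvd_pow_of_dvd hpd 2⟩
    apply Finset.le_max'
    have : q ∣ k := hq.dvd_of_dvd_pow hqd
    exact Nat.mem_primeFactors.mpr ⟨hq, this, by omega⟩
  have hinj : Set.InjOn (fun k : ℕ => k^2) ↑(Finset.Icc 2 (Nat.sqrt N)) := by
    intro a _ b _ hab
    exact Nat.pow_left_injective (by norm_num) hab
  calc Nat.sqrt N - 1 = (Finset.Icc 2 (Nat.sqrt N)).card := by rw [Nat.card_Icc]; omega
    _ = ((Finset.Icc 2 (Nat.sqrt N)).image (fun k => k^2)).card :=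
        (Finset.card_image_of_injOn hinj).symm
    _ ≤ Bcount N := Finset.card_le_card hsub

lemma Bcount_pos {N : ℕ} (hN : 4 ≤ N) : 1 ≤ Bcount N := by
  have h1 := sqrt_le_Bcount N
  have h2 : 2 ≤ Nat.sqrt N := Nat.le_sqrt.mpr (by omega)
  omega

lemma Bcount_double {N M : ℕ} (hN : 4 ≤ N) (hM : M ≤ 2*N+1) : Bcount M ≤ 9 * Bcount N := by
  set s := Nat.sqrt N with hs
  have hs2 : 2 ≤ s := Nat.le_sqrt.mpr (by omega)
  have hsplit := Finset.sum_filter_add_sum_filter_not (primesUpTo (Nat.sqrt M))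
    (fun p => p ≤ s) (fun p => psi (M / p^2) p)
  -- first part
  have hfirst : ∑ p ∈ (primesUpTo (Nat.sqrt M)).filter (fun p => p ≤ s), psi (M / p^2) p
      ≤ 3 * Bcount N := by
    have hterm : ∀ p ∈ (primesUpTo (Nat.sqrt M)).filter (fun p => p ≤ s),
        psi (M / p^2) p ≤ 3 * psi (N / p^2) p := by
      intro p hp
      obtain ⟨hpm, hps⟩ := Finset.mem_filter.mp hp
      have hpp := (mem_primesUpTo.mp hpm).2
      have hppos : 0 < p^2 := pow_pos hpp.pos 2
      have hp2N : p^2 ≤ N := by rw [sq]; exact Nat.le_sqrt.mp hps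
      apply psi_double (N / p^2) ((Nat.one_le_div_iff hppos).mpr hp2N)
      calc M/p^2 ≤ (2*N+1)/p^2 := Nat.div_le_div_right hM
        _ ≤ 2*(N/p^2)+1 := div_double_bound hppos
    calc ∑ p ∈ (primesUpTo (Nat.sqrt M)).filter (fun p => p ≤ s), psi (M / p^2) p
        ≤ ∑ p ∈ (primesUpTo (Nat.sqrt M)).filter (fun p => p ≤ s), 3 * psi (N / p^2) p :=
          Finset.sum_le_sum hterm
      _ = 3 * ∑ p ∈ (primesUpTo (Nat.sqrt M)).filter (fun p => p ≤ s), psi (N / p^2) p := by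
          rw [Finset.mul_sum]
      _ ≤ 3 * Bcount N := by
          apply Nat.mul_le_mul_left
          apply Bcount_ge
          intro p hp
          exact (mem_primesUpTo.mp (Finset.mem_filter.mp hp).1).2
  -- second part
  have hsecond : ∑ p ∈ (primesUpTo (Nat.sqrt M)).filter (fun p => ¬ p ≤ s), psi (M / p^2) p
      ≤ s + 1 := by
    have hsM : Nat.sqrt M ≤ 2*s + 1 := by
      have h1 : Nat.sqrt M ≤ Nat.sqrt (2*N+1) := Nat.sqrt_le_sqrt hM
      have h2 : Nat.sqrt (2*N+1) < 2*s+2 := by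
        rw [Nat.sqrt_lt']
        have := Nat.lt_succ_sqrt' N
        nlinarith
      omega
    have hterm : ∀ p ∈ (primesUpTo (Nat.sqrt M)).filter (fun p => ¬ p ≤ s),
        psi (M / p^2) p ≤ 1 := by
      intro p hp
      obtain ⟨hpm, hps⟩ := Finset.mem_filter.mp hp
      have hpp := (mem_primesUpTo.mp hpm).2
      have hppos : 0 < p^2 := pow_pos hpp.pos 2
      have hNp : N < p^2 := by
        rw [← Nat.sqrt_lt']
        omega
      have : M / p^2 ≤ 1 := by
        apply Nat.lt_succ_iff.mp
        rw [Nat.div_lt_iff_lt_mul hppos]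
        omega
      exact le_trans (psi_le_self _ _) this
    have hsub : (primesUpTo (Nat.sqrt M)).filter (fun p => ¬ p ≤ s) ⊆
        Finset.Icc (s+1) (2*s+1) := by
      intro p hp
      obtain ⟨hpm, hps⟩ := Finset.mem_filter.mp hp
      have := (mem_primesUpTo.mp hpm).1
      exact Finset.mem_Icc.mpr ⟨by omega, by omega⟩
    calc ∑ p ∈ (primesUpTo (Nat.sqrt M)).filter (fun p => ¬ p ≤ s), psi (M / p^2) p
        ≤ ∑ _p ∈ (primesUpTo (Nat.sqrt M)).filter (fun p => ¬ p ≤ s), 1 :=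
          Finset.sum_le_sum hterm
      _ = ((primesUpTo (Nat.sqrt M)).filter (fun p => ¬ p ≤ s)).card := by
          simp
      _ ≤ (Finset.Icc (s+1) (2*s+1)).card := Finset.card_le_card hsub
      _ = s + 1 := by rw [Nat.card_Icc]; omega
  have hlow := sqrt_le_Bcount N
  have hpos := Bcount_pos hN
  have := Bcount_le M
  omega

lemma Bcount_iter (k : ℕ) : ∀ N M : ℕ, 4 ≤ N → M ≤ 2^k * (N+1) - 1 →
    Bcount M ≤ 9^k * Bcount N := by
  induction k with
  | zero =>
    intro N M hN hM
    simpa using Bcount_mono (show M ≤ N by omega)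
  | succ k IH =>
    intro N M hN hM
    have h2k : 1 ≤ 2^k := Nat.one_le_two_pow
    set N' := 2^k * (N+1) - 1 with hN'
    have hN'4 : 4 ≤ N' := by
      have : 2^k * (N+1) ≥ 1 * (N+1) := Nat.mul_le_mul_right _ h2k
      omega
    have hMN' : M ≤ 2*N'+1 := by
      have : (2:ℕ)^(k+1) * (N+1) = 2 * (2^k * (N+1)) := by ring
      omega
    calc Bcount M ≤ 9 * Bcount N' := Bcount_double hN'4 hMN'
      _ ≤ 9 * (9^k * Bcount N) := Nat.mul_le_mul_left 9 (IH N N' hN (le_refl _))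
      _ = 9^(k+1) * Bcount N := by ring

lemma countIn_eq (x : ℝ) (hx : 0 ≤ x) : countIn badSet1 x = Bcount ⌊x⌋₊ := by
  have hset : {n : ℕ | n ∈ badSet1 ∧ 1 ≤ n ∧ (n : ℝ) ≤ x} = ↑(Bfin ⌊x⌋₊) := by
    ext n
    simp only [Set.mem_setOf_eq, Finset.coe_filter, Bfin, Finset.mem_Icc, badSet1,
      Set.mem_setOf_eq, ← Nat.le_floor_iff hx]
    tauto
  rw [countIn, hset, Set.ncard_coe_finset]
  rfl


theorem stmt_7 (c : ℝ) (hc : 0 < c) :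
    ∃ C : ℝ, 1 ≤ C ∧ ∃ x₀ : ℝ, ∀ x : ℝ, x₀ ≤ x →
      (1 / C) * (countIn badSet1 x : ℝ) ≤ (countIn badSet1 (c * x) : ℝ) ∧
      (countIn badSet1 (c * x) : ℝ) ≤ C * (countIn badSet1 x : ℝ) := by
  obtain ⟨k, hk⟩ := pow_unbounded_of_one_lt (max c c⁻¹ + 1) (by norm_num : (1:ℝ) < 2)
  have hmaxpos : 0 < max c c⁻¹ := lt_max_of_lt_left hc
  have h2k1 : 1 ≤ (2:ℕ)^k := Nat.one_le_two_pow
  have hmax2k : max c c⁻¹ ≤ ((2^k - 1 : ℕ) : ℝ) := by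
    push_cast [Nat.cast_sub h2k1]
    have : ((2:ℕ):ℝ)^k = (2:ℝ)^k := by norm_num
    linarith [hk]
  refine ⟨(9:ℝ)^k, one_le_pow₀ (by norm_num), max 5 (5/c), fun x hx => ?_⟩
  have hx5 : 5 ≤ x := le_trans (le_max_left _ _) hx
  have hx0 : 0 ≤ x := by linarith
  have hcx5 : 5 ≤ c * x := by
    have h1 : 5/c ≤ x := le_trans (le_max_right _ _) hx
    calc (5:ℝ) = c * (5/c) := by field_simp
      _ ≤ c * x := by apply mul_le_mul_of_nonneg_left h1 (le_of_lt hc)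
  have hcx0 : 0 ≤ c * x := by linarith
  set N := ⌊x⌋₊ with hN
  set M := ⌊c*x⌋₊ with hM
  have hN4 : 4 ≤ N := Nat.le_floor (by push_cast; linarith)
  have hM4 : 4 ≤ M := Nat.le_floor (by push_cast; linarith)
  have hxN : x < N + 1 := Nat.lt_floor_add_one x
  have hxM : c * x < M + 1 := Nat.lt_floor_add_one (c*x)
  -- key1 : M ≤ 2^k*(N+1) - 1
  have key1 : M ≤ 2^k * (N+1) - 1 := by
    have hr : (M:ℝ) < ((2^k - 1 : ℕ):ℝ) * ((N+1 : ℕ):ℝ) := by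
      have h1 : (M:ℝ) ≤ c * x := Nat.floor_le hcx0
      have h2 : c * x ≤ (max c c⁻¹) * x := mul_le_mul_of_nonneg_right (le_max_left _ _) hx0
      have h3 : (max c c⁻¹) * x < (max c c⁻¹) * (N+1) := by
        apply mul_lt_mul_of_pos_left hxN hmaxpos
      have h4 : (max c c⁻¹) * ((N:ℝ)+1) ≤ ((2^k - 1 : ℕ):ℝ) * ((N:ℝ)+1) := by
        apply mul_le_mul_of_nonneg_right hmax2k (by positivity)
      push_cast
      push_cast at h4
      linarith
    have hnat : M < (2^k - 1) * (N+1) := by exact_mod_cast hr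
    have : (2^k - 1) * (N+1) = 2^k * (N+1) - 1*(N+1) := Nat.sub_mul _ _ _
    omega
  have key2 : N ≤ 2^k * (M+1) - 1 := by
    have hr : (N:ℝ) < ((2^k - 1 : ℕ):ℝ) * ((M+1 : ℕ):ℝ) := by
      have h1 : (N:ℝ) ≤ x := Nat.floor_le hx0
      have h2 : x ≤ (max c c⁻¹) * (c * x) := by
        have heq : x = c⁻¹ * (c * x) := by field_simp
        calc x = c⁻¹ * (c * x) := heq
          _ ≤ (max c c⁻¹) * (c * x) := mul_le_mul_of_nonneg_right (le_max_right _ _) hcx0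
      have h3 : (max c c⁻¹) * (c * x) < (max c c⁻¹) * (M+1) :=
        mul_lt_mul_of_pos_left hxM hmaxpos
      have h4 : (max c c⁻¹) * ((M:ℝ)+1) ≤ ((2^k - 1 : ℕ):ℝ) * ((M:ℝ)+1) :=
        mul_le_mul_of_nonneg_right hmax2k (by positivity)
      push_cast
      push_cast at h4
      linarith
    have hnat : N < (2^k - 1) * (M+1) := by exact_mod_cast hr
    have : (2^k - 1) * (M+1) = 2^k * (M+1) - 1*(M+1) := Nat.sub_mul _ _ _
    omega
  have hb1 : Bcount M ≤ 9^k * Bcount N := Bcount_iter k N M hN4 key1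
  have hb2 : Bcount N ≤ 9^k * Bcount M := Bcount_iter k M N hM4 key2
  rw [countIn_eq x hx0, countIn_eq (c*x) hcx0, ← hN, ← hM]
  have hr1 : (Bcount M : ℝ) ≤ 9^k * Bcount N := by
    have := (Nat.cast_le (α := ℝ)).mpr hb1
    push_cast at this
    linarith
  have hr2 : (Bcount N : ℝ) ≤ 9^k * Bcount M := by
    have := (Nat.cast_le (α := ℝ)).mpr hb2
    push_cast at this
    linarith
  constructor
  · rw [one_div, inv_mul_le_iff₀ (by positivity)]
    exact hr2
  · exact hr1
end

section
/- There exists an absolute constant C > 0 with the following property: whenever {N+1,…,N+H} is a very bad interval with H > 1, there exist powerful natural numbers n, m and natural numbers a, b, h with 1 ≤ h ≤ H, a ≤ C·H^C, b ≤ C·H^C, such that a·n and b·m both lie in {N+1,…,N+H} and a·n + h = b·m. -/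
/-- A natural number `n` is powerful if every prime dividing it divides it at least twice. -/
def NatPowerful (n : ℕ) : Prop := ∀ p : ℕ, p.Prime → p ∣ n → p ^ 2 ∣ n

/-- The interval `{N+1, …, N+H}` is very bad. -/
def IsVeryBadInterval (N H : ℕ) : Prop :=
  1 ≤ H ∧ NatPowerful (intervalProd N H)

/-- `𝒱ℬ`: natural numbers contained in at least one very bad interval. -/
def vbSet : Set ℕ := {n | ∃ N H : ℕ, IsVeryBadInterval N H ∧ N + 1 ≤ n ∧ n ≤ N + H}

/-- `𝒱ℬ¹`: the set of powerful numbers. -/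
def vbSet1 : Set ℕ := {n | NatPowerful n}

open Finset
def spart (x : ℕ) : ℕ := ∏ p ∈ x.primeFactors.filter (fun p => x.factorization p = 1), p
def qpart (x : ℕ) : ℕ :=
  ∏ p ∈ x.primeFactors.filter (fun p => 2 ≤ x.factorization p), p ^ x.factorization p

lemma spart_pos {x : ℕ} : 0 < spart x :=
  Finset.prod_pos fun p hp => (Nat.prime_of_mem_primeFactors (Finset.mem_filter.1 hp).1).pos

lemma spart_mul_qpart {x : ℕ} (hx : x ≠ 0) : spart x * qpart x = x := by
  conv_rhs => rw [← Nat.factorization_prod_pow_eq_self hx,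
    Nat.prod_factorization_eq_prod_primeFactors,
    ← Finset.prod_filter_mul_prod_filter_not x.primeFactors (fun p => x.factorization p = 1)]
  unfold spart qpart
  congr 1
  · exact Finset.prod_congr rfl fun p hp => by
      rw [(Finset.mem_filter.1 hp).2, pow_one]
  · apply Finset.prod_congr _ fun p _ => rfl
    apply Finset.filter_congr
    intro p hp
    have h1 : 1 ≤ x.factorization p := (Nat.Prime.factorization_pos_of_dvd
      (Nat.prime_of_mem_primeFactors hp) hx (Nat.dvd_of_mem_primeFactors hp))
    constructor
    · intro h2; omega
    · intro h2; omega

lemma natPowerful_qpart (x : ℕ) : NatPowerful (qpart x) := by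
  intro p hp hdvd
  unfold qpart at *
  obtain ⟨q, hq, hpq⟩ := hp.prime.exists_mem_finset_dvd hdvd
  have hqm := Finset.mem_filter.1 hq
  have hqprime := Nat.prime_of_mem_primeFactors hqm.1
  have : p = q := by
    rcases (Nat.prime_dvd_prime_iff_eq hp hqprime).1 (hp.dvd_of_dvd_pow hpq) with h
    exact h
  subst this
  calc p ^ 2 ∣ p ^ x.factorization p := pow_dvd_pow p hqm.2
  _ ∣ _ := Finset.dvd_prod_of_mem (fun q => q ^ x.factorization q) hq

lemma factorization_spart (x p : ℕ) (hp : p.Prime) :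
    (spart x).factorization p
      = if p ∈ x.primeFactors.filter (fun p => x.factorization p = 1) then 1 else 0 := by
  unfold spart
  rw [Nat.factorization_prod (fun q hq => (Nat.prime_of_mem_primeFactors (Finset.mem_filter.1 hq).1).ne_zero)]
  rw [Finset.sum_apply']
  by_cases hmem : p ∈ x.primeFactors.filter (fun p => x.factorization p = 1)
  · rw [if_pos hmem, Finset.sum_eq_single_of_mem p hmem]
    · rw [Nat.Prime.factorization hp]; simp
    · intro q hq hne
      rw [Nat.Prime.factorization (Nat.prime_of_mem_primeFactors (Finset.mem_filter.1 hq).1)]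
      simp [hne]
  · rw [if_neg hmem]
    apply Finset.sum_eq_zero
    intro q hq
    rw [Nat.Prime.factorization (Nat.prime_of_mem_primeFactors (Finset.mem_filter.1 hq).1)]
    have : q ≠ p := fun h => hmem (h ▸ hq)
    simp [this]

lemma intervalProd_eq (N H : ℕ) : intervalProd N H = ∏ x ∈ Finset.Ioc N (N + H), x := by
  rw [intervalProd, ← Finset.Icc_add_one_left_eq_Ioc]
  rw [show Finset.Icc (N+1) (N+H) = (Finset.Icc 1 H).map (addLeftEmbedding N) by
    rw [Finset.map_add_left_Icc]]
  rw [Finset.prod_map]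
  rfl

lemma intervalProd_ne_zero (N H : ℕ) : intervalProd N H ≠ 0 := by
  rw [intervalProd_eq]
  exact Finset.prod_ne_zero_iff.2 fun x hx => by
    have := (Finset.mem_Ioc.1 hx).1; omega

lemma prime_lt_of_exact_one {N H : ℕ} (hP : NatPowerful (intervalProd N H)) {x p : ℕ}
    (hx : x ∈ Finset.Ioc N (N + H)) (hp : p.Prime) (h1 : x.factorization p = 1) : p < H := by
  have hPne := intervalProd_ne_zero N H
  have hxpos : 0 < x := by have := (Finset.mem_Ioc.1 hx).1; omega
  have hpx : p ∣ x := by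
    have : p ^ 1 ∣ x := (Nat.Prime.pow_dvd_iff_le_factorization hp hxpos.ne').2 (le_of_eq h1.symm)
    simpa using this
  have hxP : x ∣ intervalProd N H := by
    rw [intervalProd_eq]; exact Finset.dvd_prod_of_mem _ hx
  have h2 : 2 ≤ (intervalProd N H).factorization p :=
    (Nat.Prime.pow_dvd_iff_le_factorization hp hPne).1 (hP p hp (hpx.trans hxP))
  have hfac : (intervalProd N H).factorization p
      = ∑ y ∈ Finset.Ioc N (N + H), y.factorization p := by
    rw [intervalProd_eq, Nat.factorization_prod (fun y hy => by
      have := (Finset.mem_Ioc.1 hy).1; omega), Finset.sum_apply']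
  have hsum : 1 ≤ ∑ y ∈ (Finset.Ioc N (N + H)).erase x, y.factorization p := by
    have h3 := Finset.add_sum_erase _ (fun y => y.factorization p) hx
    omega
  obtain ⟨y, hy, hy1⟩ : ∃ y ∈ (Finset.Ioc N (N + H)).erase x, 1 ≤ y.factorization p := by
    by_contra hc
    push_neg at hc
    have : ∑ y ∈ (Finset.Ioc N (N + H)).erase x, y.factorization p = 0 :=
      Finset.sum_eq_zero fun y hy => by have := hc y hy; omega
    omega
  have hyne : y ≠ x := Finset.ne_of_mem_erase hy
  have hymem := Finset.mem_erase.1 hy |>.2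
  have hypos : 0 < y := by have := (Finset.mem_Ioc.1 hymem).1; omega
  have hpy : p ∣ y := by
    have : p ^ 1 ∣ y := (Nat.Prime.pow_dvd_iff_le_factorization hp hypos.ne').2 hy1
    simpa using this
  have hxb := Finset.mem_Ioc.1 hx
  have hyb := Finset.mem_Ioc.1 hymem
  rcases lt_or_gt_of_ne hyne with hlt | hgt
  · have : p ∣ x - y := Nat.dvd_sub hpx hpy
    have hle : p ≤ x - y := Nat.le_of_dvd (by omega) this
    omega
  · have : p ∣ y - x := Nat.dvd_sub hpy hpx
    have hle : p ≤ y - x := Nat.le_of_dvd (by omega) this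
    omega

lemma factorization_prod_primes_pow (T : Finset ℕ) (hT : ∀ p ∈ T, p.Prime) (e : ℕ → ℕ) (q : ℕ) :
    (∏ p ∈ T, p ^ e p).factorization q = if q ∈ T then e q else 0 := by
  rw [Nat.factorization_prod (fun p hp => pow_ne_zero _ (hT p hp).ne_zero), Finset.sum_apply']
  by_cases hq : q ∈ T
  · rw [if_pos hq, Finset.sum_eq_single_of_mem q hq]
    · rw [Nat.factorization_pow, Nat.Prime.factorization (hT q hq)]; simp
    · intro p hp hne
      rw [Nat.factorization_pow, Nat.Prime.factorization (hT p hp)]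
      simp [hne]
  · rw [if_neg hq]
    apply Finset.sum_eq_zero
    intro p hp
    rw [Nat.factorization_pow, Nat.Prime.factorization (hT p hp)]
    have : p ≠ q := fun h => hq (h ▸ hp)
    simp [this]

lemma pow_div_dvd_factorial {p : ℕ} (hp : p.Prime) (H : ℕ) : p ^ (H / p) ∣ Nat.factorial H := by
  set k := H / p with hk
  have hsub : (Finset.Icc 1 k).image (p * ·) ⊆ Finset.Icc 1 H := by
    intro x hx
    obtain ⟨i, hi, rfl⟩ := Finset.mem_image.1 hx
    have hi' := Finset.mem_Icc.1 hi
    have hpk : p * k ≤ H := by rw [hk, mul_comm]; exact Nat.div_mul_le_self H p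
    have h1 : 1 ≤ p * i := Nat.one_le_iff_ne_zero.2 (Nat.mul_ne_zero hp.pos.ne' (by omega))
    have h2 : p * i ≤ H := le_trans (Nat.mul_le_mul_left p hi'.2) hpk
    exact Finset.mem_Icc.2 ⟨h1, h2⟩
  have himg : ∏ x ∈ (Finset.Icc 1 k).image (p * ·), x = p ^ k * Nat.factorial k := by
    rw [Finset.prod_image (fun a _ b _ h => Nat.eq_of_mul_eq_mul_left hp.pos h)]
    rw [Finset.prod_mul_distrib, Finset.prod_const]
    have hcard : (Finset.Icc 1 k).card = k := by rw [Nat.card_Icc]; simp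
    rw [hcard, ← Finset.Ico_add_one_right_eq_Icc, Finset.prod_Ico_id_eq_factorial]
  have : ∏ x ∈ (Finset.Icc 1 k).image (p * ·), x ∣ ∏ x ∈ Finset.Icc 1 H, x :=
    Finset.prod_dvd_prod_of_subset _ _ _ hsub
  rw [himg, ← Finset.Ico_add_one_right_eq_Icc, Finset.prod_Ico_id_eq_factorial] at this
  exact dvd_trans (dvd_mul_right _ _) this

lemma card_multiples_Ioc {q : ℕ} (hq : 0 < q) (N H : ℕ) :
    ((Finset.Ioc N (N + H)).filter (fun x => q ∣ x)).card ≤ H / q + 1 := by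
  have h1 : ((Finset.Ioc N (N + H)).filter (fun x => q ∣ x)).card
      ≤ (Finset.Ioc (N / q) ((N + H) / q)).card := by
    apply Finset.card_le_card_of_injOn (fun x => x / q)
    · intro x hx
      obtain ⟨hx1, hx2⟩ := Finset.mem_filter.1 hx
      obtain ⟨hN, hNH⟩ := Finset.mem_Ioc.1 hx1
      refine Finset.mem_Ioc.2 ⟨?_, Nat.div_le_div_right hNH⟩
      by_contra hc
      push_neg at hc
      have : q * (x / q) ≤ q * (N / q) := Nat.mul_le_mul_left q hc
      rw [Nat.mul_div_cancel' hx2] at this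
      have : q * (N / q) ≤ N := Nat.mul_div_le N q
      omega
    · intro x hx y hy hxy
      have hx2 := (Finset.mem_filter.1 hx).2
      have hy2 := (Finset.mem_filter.1 hy).2
      simp only at hxy
      rw [← Nat.mul_div_cancel' hx2, ← Nat.mul_div_cancel' hy2, hxy]
  rw [Nat.card_Ioc] at h1
  have h2 : (N + H) / q ≤ N / q + H / q + 1 := by
    rw [Nat.add_div hq]
    split <;> omega
  refine h1.trans ?_
  generalize N / q = A at h2 ⊢
  generalize H / q = B at h2 ⊢
  generalize (N + H) / q = D at h2 ⊢
  omega

lemma prod_spart_dvd {N H : ℕ} (hP : NatPowerful (intervalProd N H)) :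
    ∏ x ∈ Finset.Ioc N (N + H), spart x
      ∣ ∏ p ∈ (Finset.range H).filter Nat.Prime, p ^ (H / p + 1) := by
  have hLne : ∏ x ∈ Finset.Ioc N (N + H), spart x ≠ 0 :=
    (Finset.prod_pos fun x _ => spart_pos).ne'
  have hRne : ∏ p ∈ (Finset.range H).filter Nat.Prime, p ^ (H / p + 1) ≠ 0 :=
    (Finset.prod_pos fun p hp => pow_pos (Finset.mem_filter.1 hp).2.pos _).ne'
  rw [← Nat.factorization_le_iff_dvd hLne hRne]
  intro q
  by_cases hq : q.Prime
  · rw [Nat.factorization_prod (fun x _ => spart_pos.ne'),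
      factorization_prod_primes_pow _ (fun p hp => (Finset.mem_filter.1 hp).2) _ q,
      Finset.sum_apply']
    have hterm : ∀ x ∈ Finset.Ioc N (N + H), (spart x).factorization q
        = if q ∈ x.primeFactors.filter (fun p => x.factorization p = 1) then 1 else 0 :=
      fun x _ => factorization_spart x q hq
    rw [Finset.sum_congr rfl hterm, ← Finset.card_filter]
    set c := ((Finset.Ioc N (N + H)).filter
      (fun x => q ∈ x.primeFactors.filter (fun p => x.factorization p = 1))).card with hc
    rcases Nat.eq_zero_or_pos c with h0 | hpos
    · simp [← hc, h0]
    · obtain ⟨x, hx⟩ := Finset.card_pos.1 hpos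
      obtain ⟨hxS, hxq⟩ := Finset.mem_filter.1 hx
      obtain ⟨hqf, hv1⟩ := Finset.mem_filter.1 hxq
      have hqH : q < H := prime_lt_of_exact_one hP hxS hq hv1
      rw [if_pos (Finset.mem_filter.2 ⟨Finset.mem_range.2 hqH, hq⟩)]
      have hsub : (Finset.Ioc N (N + H)).filter
          (fun x => q ∈ x.primeFactors.filter (fun p => x.factorization p = 1))
          ⊆ (Finset.Ioc N (N + H)).filter (fun x => q ∣ x) := by
        intro y hy
        obtain ⟨hy1, hy2⟩ := Finset.mem_filter.1 hy
        exact Finset.mem_filter.2 ⟨hy1, Nat.dvd_of_mem_primeFactors (Finset.mem_filter.1 hy2).1⟩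
      exact le_trans (Finset.card_le_card hsub) (card_multiples_Ioc hq.pos N H)
  · rw [Nat.factorization_eq_zero_of_not_prime _ hq]
    exact Nat.zero_le _

lemma prod_pow_le_factorial_mul (H : ℕ) :
    ∏ p ∈ (Finset.range H).filter Nat.Prime, p ^ (H / p + 1)
      ≤ Nat.factorial H * 4 ^ H := by
  have hsplit : ∏ p ∈ (Finset.range H).filter Nat.Prime, p ^ (H / p + 1)
      = (∏ p ∈ (Finset.range H).filter Nat.Prime, p ^ (H / p))
        * ∏ p ∈ (Finset.range H).filter Nat.Prime, p := by
    rw [← Finset.prod_mul_distrib]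
    exact Finset.prod_congr rfl fun p _ => by rw [pow_succ]
  rw [hsplit]
  have h1 : (∏ p ∈ (Finset.range H).filter Nat.Prime, p ^ (H / p)) ∣ Nat.factorial H := by
    have hLne : (∏ p ∈ (Finset.range H).filter Nat.Prime, p ^ (H / p)) ≠ 0 :=
      (Finset.prod_pos fun p hp => pow_pos (Finset.mem_filter.1 hp).2.pos _).ne'
    rw [← Nat.factorization_le_iff_dvd hLne (Nat.factorial_ne_zero H)]
    intro q
    by_cases hq : q.Prime
    · rw [factorization_prod_primes_pow _ (fun p hp => (Finset.mem_filter.1 hp).2) _ q]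
      split
      · exact (Nat.Prime.pow_dvd_iff_le_factorization hq (Nat.factorial_ne_zero H)).1
          (pow_div_dvd_factorial hq H)
      · exact Nat.zero_le _
    · rw [Nat.factorization_eq_zero_of_not_prime _ hq]
      exact Nat.zero_le _
  have h2 : (∏ p ∈ (Finset.range H).filter Nat.Prime, p) ≤ 4 ^ H := by
    refine le_trans ?_ (primorial_le_4_pow H)
    rw [primorial]
    apply Finset.prod_le_prod_of_subset_of_one_le'
    · exact Finset.filter_subset_filter _ (Finset.range_subset_range.2 (by omega))
    · intro p hp _
      exact (Finset.mem_filter.1 hp).2.one_lt.le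
  exact Nat.mul_le_mul (Nat.le_of_dvd (Nat.factorial_pos H) h1) h2

lemma nat_factorial_lt_pow {H : ℕ} (h : 2 ≤ H) : Nat.factorial H < H ^ H := by
  have h1 : Nat.factorial (H - 1) ≤ (H - 1) ^ (H - 1) := Nat.factorial_le_pow _
  have h2 : (H - 1) ^ (H - 1) < H ^ (H - 1) := Nat.pow_lt_pow_left (by omega) (by omega)
  have h3 : Nat.factorial H = H * Nat.factorial (H - 1) := by
    conv_lhs => rw [show H = (H - 1) + 1 by omega]
    rw [Nat.factorial_succ]
    congr 2
    omega
  calc Nat.factorial H = H * Nat.factorial (H - 1) := h3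
    _ < H * H ^ (H - 1) := mul_lt_mul_of_pos_left (lt_of_le_of_lt h1 h2) (by omega)
    _ = H ^ H := by rw [← pow_succ']; congr 1; omega

lemma prod_spart_lt {N H : ℕ} (hP : NatPowerful (intervalProd N H)) (hH : 2 ≤ H) :
    ∏ x ∈ Finset.Ioc N (N + H), spart x < (4 * H) ^ H := by
  have hRpos : 0 < ∏ p ∈ (Finset.range H).filter Nat.Prime, p ^ (H / p + 1) :=
    Finset.prod_pos fun p hp => pow_pos (Finset.mem_filter.1 hp).2.pos _
  calc ∏ x ∈ Finset.Ioc N (N + H), spart x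
      ≤ ∏ p ∈ (Finset.range H).filter Nat.Prime, p ^ (H / p + 1) :=
        Nat.le_of_dvd hRpos (prod_spart_dvd hP)
    _ ≤ Nat.factorial H * 4 ^ H := prod_pow_le_factorial_mul H
    _ < H ^ H * 4 ^ H := by
        exact mul_lt_mul_of_pos_right (nat_factorial_lt_pow hH) (pow_pos (by omega) H)
    _ = (4 * H) ^ H := by rw [← Nat.mul_pow, mul_comm]

lemma construct_aux {N H : ℕ} (hH2 : 2 ≤ H) {x y : ℕ} (hxy : x < y)
    (hx : x ∈ (Finset.Ioc N (N + H)).filter (fun z => spart z ≤ 16 * H ^ 2))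
    (hy : y ∈ (Finset.Ioc N (N + H)).filter (fun z => spart z ≤ 16 * H ^ 2)) :
    ∃ n m a b h : ℕ, NatPowerful n ∧ NatPowerful m ∧
        1 ≤ h ∧ h ≤ H ∧
        (a : ℝ) ≤ 16 * (H : ℝ) ^ (16 : ℝ) ∧ (b : ℝ) ≤ 16 * (H : ℝ) ^ (16 : ℝ) ∧
        N + 1 ≤ a * n ∧ a * n ≤ N + H ∧
        N + 1 ≤ b * m ∧ b * m ≤ N + H ∧
        a * n + h = b * m := by
  obtain ⟨hxS, hxB⟩ := Finset.mem_filter.1 hx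
  obtain ⟨hyS, hyB⟩ := Finset.mem_filter.1 hy
  obtain ⟨hx1, hx2⟩ := Finset.mem_Ioc.1 hxS
  obtain ⟨hy1, hy2⟩ := Finset.mem_Ioc.1 hyS
  have hxne : x ≠ 0 := by omega
  have hyne : y ≠ 0 := by omega
  have hbound : ∀ a : ℕ, a ≤ 16 * H ^ 2 → (a : ℝ) ≤ 16 * (H : ℝ) ^ (16 : ℝ) := by
    intro a ha
    have h1 : (a : ℝ) ≤ 16 * (H : ℝ) ^ (2 : ℕ) := by
      calc (a : ℝ) ≤ ((16 * H ^ 2 : ℕ) : ℝ) := Nat.cast_le.2 ha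
        _ = 16 * (H : ℝ) ^ (2 : ℕ) := by push_cast; ring
    refine h1.trans ?_
    have hH1 : (1 : ℝ) ≤ (H : ℝ) := by exact_mod_cast (by omega : 1 ≤ H)
    have h2 : (H : ℝ) ^ (2 : ℕ) = (H : ℝ) ^ ((2 : ℕ) : ℝ) := (Real.rpow_natCast _ 2).symm
    rw [h2]
    have h3 : (H : ℝ) ^ ((2 : ℕ) : ℝ) ≤ (H : ℝ) ^ (16 : ℝ) :=
      Real.rpow_le_rpow_of_exponent_le hH1 (by norm_num)
    linarith
  refine ⟨qpart x, qpart y, spart x, spart y, y - x,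
    natPowerful_qpart x, natPowerful_qpart y, by omega, by omega,
    hbound _ hxB, hbound _ hyB, ?_, ?_, ?_, ?_, ?_⟩
  · rw [spart_mul_qpart hxne]; omega
  · rw [spart_mul_qpart hxne]; omega
  · rw [spart_mul_qpart hyne]; omega
  · rw [spart_mul_qpart hyne]; omega
  · rw [spart_mul_qpart hxne, spart_mul_qpart hyne]; omega

theorem stmt_11 :
    ∃ C : ℝ, 0 < C ∧ ∀ N H : ℕ, IsVeryBadInterval N H → 1 < H →
      ∃ n m a b h : ℕ, NatPowerful n ∧ NatPowerful m ∧
        1 ≤ h ∧ h ≤ H ∧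
        (a : ℝ) ≤ C * (H : ℝ) ^ C ∧ (b : ℝ) ≤ C * (H : ℝ) ^ C ∧
        N + 1 ≤ a * n ∧ a * n ≤ N + H ∧
        N + 1 ≤ b * m ∧ b * m ≤ N + H ∧
        a * n + h = b * m := by
  refine ⟨16, by norm_num, ?_⟩
  intro N H hVB hH
  have hH2 : 2 ≤ H := hH
  set S := Finset.Ioc N (N + H) with hS
  set B := 16 * H ^ 2 with hB
  set bad := S.filter (fun x => ¬ spart x ≤ B) with hbad
  set good := S.filter (fun x => spart x ≤ B) with hgood
  -- bound on bad cardinality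
  have hprodlt : ∏ x ∈ S, spart x < (4 * H) ^ H := prod_spart_lt hVB.2 hH2
  have hbadbound : B ^ bad.card ≤ ∏ x ∈ S, spart x := by
    calc B ^ bad.card ≤ ∏ x ∈ bad, spart x :=
          Finset.pow_card_le_prod _ _ _ (fun x hx => by
            have := (Finset.mem_filter.1 hx).2
            omega)
      _ ≤ ∏ x ∈ S, spart x :=
          Finset.prod_le_prod_of_subset_of_one_le' (Finset.filter_subset _ _)
            (fun x _ _ => spart_pos)
  have hBeq : B = (4 * H) ^ 2 := by ring
  have h2card : 2 * bad.card < H := by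
    have h1 : (4 * H) ^ (2 * bad.card) < (4 * H) ^ H := by
      rw [pow_mul, ← hBeq]
      exact lt_of_le_of_lt hbadbound hprodlt
    exact (Nat.pow_lt_pow_iff_right (by omega)).1 h1
  have hcards : good.card + bad.card = H := by
    rw [hgood, hbad, Finset.card_filter_add_card_filter_not]
    rw [hS, Nat.card_Ioc]
    omega
  have hgood2 : 1 < good.card := by omega
  obtain ⟨x, hx, y, hy, hxy⟩ := Finset.one_lt_card.1 hgood2
  -- wlog x < y
  rcases lt_or_gt_of_ne hxy with hlt | hgt
  case _ =>
    exact construct_aux hH2 hlt hx hy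
  case _ =>
    exact construct_aux hH2 hgt hy hx
end

section
/- There exists an absolute constant C > 0 with the following property: suppose H > 1 and {N+1,…,N+H} is an interval whose product (N+1)⋯(N+H) has the same squarefree component as a! for some 1 ≤ a < N, and set P := max(a,H). Then there exist P-smooth natural numbers a₁, a₂ with a₁ ≤ C·exp(C·P/H)·H^C and a₂ ≤ C·exp(C·P/H)·H^C, natural numbers n₁, n₂, and a natural number h with 1 ≤ h ≤ H, such that a₁·n₁² and a₂·n₂² both lie in {N+1,…,N+H} and a₁·n₁² + h = a₂·n₂². -/
/-- The squarefree component of `n`: the squarefree number `s` such that `n = s·m²`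
(the product of primes dividing `n` to an odd power). -/
def sqfreePart (n : ℕ) : ℕ := ∏ p ∈ n.primeFactors, p ^ (n.factorization p % 2)

/-- The interval `{N+1, …, N+H}` is of type `F₃`: its product has the same squarefree
component as `a!` for some `1 ≤ a < N`. -/
def IsF3Interval (N H : ℕ) : Prop :=
  1 ≤ H ∧ ∃ a : ℕ, 1 ≤ a ∧ a < N ∧
    sqfreePart (intervalProd N H) = sqfreePart (Nat.factorial a)

/-- `ℱ₃`: natural numbers of the form `N+H` for some type `F₃` interval `{N+1,…,N+H}`. -/
def F3 : Set ℕ := {n | ∃ N H : ℕ, IsF3Interval N H ∧ n = N + H}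

/-- `ℱ₃¹`: natural numbers `n` with `s(n) = s(a!)` for some `1 ≤ a < n - 1`. -/
def F31 : Set ℕ :=
  {n | ∃ a : ℕ, 1 ≤ a ∧ a + 1 < n ∧ sqfreePart n = sqfreePart (Nat.factorial a)}

/-- `n` is `y`-smooth: all prime factors of `n` are at most `y`. -/
def NatSmooth (y : ℕ) (n : ℕ) : Prop := ∀ p : ℕ, p.Prime → p ∣ n → p ≤ y

open Finset

lemma sqfreePart_ne_zero (n : ℕ) : sqfreePart n ≠ 0 :=
  prod_ne_zero_iff.mpr fun _ hp => pow_ne_zero _ (Nat.pos_of_mem_primeFactors hp).ne'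

lemma factorization_sqfreePart (n p : ℕ) :
    (sqfreePart n).factorization p = n.factorization p % 2 := by
  rw [sqfreePart,
    Nat.factorization_prod fun q hq => pow_ne_zero _ (Nat.pos_of_mem_primeFactors hq).ne',
    sum_apply', sum_congr rfl fun q hq => by
      rw [(Nat.prime_of_mem_primeFactors hq).factorization_pow, Finsupp.single_apply], sum_ite_eq']
  split_ifs with hp
  · rfl
  · simp [Finsupp.notMem_support_iff.mp (Nat.support_factorization n ▸ hp)]

lemma sqfreePart_dvd (n : ℕ) : sqfreePart n ∣ n := by
  rcases eq_or_ne n 0 with rfl | hn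
  · exact dvd_zero _
  rw [← Nat.factorization_le_iff_dvd (sqfreePart_ne_zero n) hn]
  intro p
  rw [factorization_sqfreePart]
  exact Nat.mod_le _ _

lemma exists_eq_sqfreePart_mul_sq {n : ℕ} (hn : n ≠ 0) : ∃ m, n = sqfreePart n * m ^ 2 := by
  refine ⟨∏ p ∈ n.primeFactors, p ^ (n.factorization p / 2), ?_⟩
  rw [sqfreePart, ← prod_pow, ← prod_mul_distrib]
  conv_lhs =>
    rw [← Nat.prod_factorization_pow_eq_self hn, Nat.prod_factorization_eq_prod_primeFactors]
  refine prod_congr rfl fun p _ => ?_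
  rw [← pow_mul, ← pow_add, Nat.mod_add_div']

lemma Nat.Prime.dvd_sqfreePart_iff {p : ℕ} (hp : p.Prime) (n : ℕ) :
    p ∣ sqfreePart n ↔ n.factorization p % 2 = 1 := by
  rw [hp.dvd_iff_one_le_factorization (sqfreePart_ne_zero n), factorization_sqfreePart]
  omega

lemma intervalProd_eq_prod_Ioc (N H : ℕ) : intervalProd N H = ∏ n ∈ Ioc N (N + H), n := by
  rw [intervalProd, ← Icc_add_one_left_eq_Ioc, ← map_add_left_Icc, prod_map]
  rfl

lemma eq_of_dvd_of_mem_Ioc {p N H m n : ℕ} (hHp : H ≤ p) (hm : m ∈ Ioc N (N + H))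
    (hn : n ∈ Ioc N (N + H)) (hpm : p ∣ m) (hpn : p ∣ n) : m = n := by
  rw [mem_Ioc] at hm hn
  have := Nat.eq_zero_of_dvd_of_lt (Nat.dvd_sub hpm hpn) (by omega)
  have := Nat.eq_zero_of_dvd_of_lt (Nat.dvd_sub hpn hpm) (by omega)
  omega

lemma factorization_prod_Ioc_of_dvd {p N H n : ℕ} (hHp : H ≤ p) (hn : n ∈ Ioc N (N + H))
    (hpn : p ∣ n) : (∏ m ∈ Ioc N (N + H), m).factorization p = n.factorization p := by
  rw [Nat.factorization_prod fun m hm => by have := (mem_Ioc.mp hm).1; omega, sum_apply']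
  refine sum_eq_single_of_mem n hn fun m hm hmn => Nat.factorization_eq_zero_of_not_dvd ?_
  exact fun hpm => hmn (eq_of_dvd_of_mem_Ioc hHp hm hn hpm hpn)

lemma natSmooth_sqfreePart_of_mem_Ioc {N H a n : ℕ}
    (heq : sqfreePart (intervalProd N H) = sqfreePart a.factorial) (hn : n ∈ Ioc N (N + H)) :
    NatSmooth (max a H) (sqfreePart n) := by
  intro p hp hpn
  by_contra! hlt
  have hodd := (hp.dvd_sqfreePart_iff n).mp hpn
  have hpN : p ∣ sqfreePart (intervalProd N H) := by
    rw [hp.dvd_sqfreePart_iff, intervalProd_eq_prod_Ioc,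
      factorization_prod_Ioc_of_dvd (by omega) hn (hpn.trans (sqfreePart_dvd n))]
    exact hodd
  rw [heq] at hpN
  have := hp.dvd_factorial.mp (hpN.trans (sqfreePart_dvd _))
  omega

lemma card_filter_dvd_Ioc_le (N H : ℕ) {p : ℕ} (hp : 0 < p) :
    #{n ∈ Ioc N (N + H) | p ∣ n} ≤ H / p + 1 := by
  have hsplit : #{n ∈ Ioc 0 (N + H) | p ∣ n} =
      #{n ∈ Ioc 0 N | p ∣ n} + #{n ∈ Ioc N (N + H) | p ∣ n} := by
    rw [← card_union_of_disjoint (disjoint_filter_filter (Ioc_disjoint_Ioc_of_le le_rfl)),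
      ← filter_union, Ioc_union_Ioc_eq_Ioc (Nat.zero_le N) (Nat.le_add_right N H)]
  rw [Nat.Ioc_filter_dvd_card_eq_div, Nat.Ioc_filter_dvd_card_eq_div, Nat.add_div hp] at hsplit
  split_ifs at hsplit <;> omega

lemma factorization_prod_sqfreePart_le (s : Finset ℕ) (p : ℕ) :
    (∏ n ∈ s, sqfreePart n).factorization p ≤ #{n ∈ s | p ∣ n} := by
  rw [Nat.factorization_prod fun n _ => sqfreePart_ne_zero n, sum_apply', card_filter]
  refine sum_le_sum fun n _ => ?_
  rw [factorization_sqfreePart]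
  split_ifs with hpn
  · exact Nat.le_of_lt_succ (Nat.mod_lt _ two_pos)
  · rw [Nat.factorization_eq_zero_of_not_dvd hpn]

lemma Nat.Prime.div_le_factorization_factorial {p : ℕ} (hp : p.Prime) (n : ℕ) :
    n / p ≤ n.factorial.factorization p := by
  rw [Nat.factorization_factorial hp (b := Nat.log p n + 2) (by omega)]
  simpa using single_le_sum (f := fun i => n / p ^ i) (fun _ _ => Nat.zero_le _)
    (show 1 ∈ Ico 1 (Nat.log p n + 2) by simp)

lemma prod_sqfreePart_Ioc_dvd {N H P : ℕ}
    (hsmooth : ∀ n ∈ Ioc N (N + H), NatSmooth P (sqfreePart n)) :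
    ∏ n ∈ Ioc N (N + H), sqfreePart n ∣ H.factorial * primorial P := by
  have hprim : primorial P ≠ 0 := (primorial_pos P).ne'
  rw [← Nat.factorization_le_iff_dvd (prod_ne_zero_iff.mpr fun n _ => sqfreePart_ne_zero n)
    (mul_ne_zero H.factorial_ne_zero hprim), Finsupp.le_def]
  intro p
  by_cases hp : p.Prime
  swap
  · simp [Nat.factorization_eq_zero_of_not_prime _ hp]
  by_cases hpP : p ≤ P
  · rw [Nat.factorization_mul H.factorial_ne_zero hprim, Finsupp.add_apply]
    have hprim_pos : 1 ≤ (primorial P).factorization p :=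
      (hp.dvd_iff_one_le_factorization hprim).mp (hp.dvd_primorial_iff.mpr hpP)
    calc _ ≤ #{n ∈ Ioc N (N + H) | p ∣ n} := factorization_prod_sqfreePart_le _ p
      _ ≤ H / p + 1 := card_filter_dvd_Ioc_le N H hp.pos
      _ ≤ _ := add_le_add (hp.div_le_factorization_factorial H) hprim_pos
  · rw [Nat.factorization_eq_zero_of_not_dvd fun hdvd => ?_]
    · exact Nat.zero_le _
    obtain ⟨n, hn, hpn⟩ := (Prime.dvd_finsetProd_iff hp.prime _).mp hdvd
    exact hpP (hsmooth n hn p hp hpn)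

lemma two_le_card_filter_pow_card_le_sq {ι : Type*} (s : Finset ι) (f : ι → ℕ) {B : ℕ}
    (hs : 2 ≤ #s) (hf : ∀ i ∈ s, f i ≠ 0) (hprod : ∏ i ∈ s, f i ≤ B) :
    2 ≤ #{i ∈ s | f i ^ #s ≤ B ^ 2} := by
  have hB : 0 < B := (Nat.pos_of_ne_zero (prod_ne_zero_iff.mpr hf)).trans_le hprod
  set bad := {i ∈ s | ¬ f i ^ #s ≤ B ^ 2}
  have hbad : 2 * #bad < #s := by
    rcases bad.eq_empty_or_nonempty with hempty | hne
    · rw [hempty, card_empty]; omega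
    by_contra! hle
    have : (B ^ 2) ^ #bad < (∏ i ∈ s, f i) ^ #s := calc
      (B ^ 2) ^ #bad < ∏ i ∈ bad, f i ^ #s := by
        rw [← prod_const]
        exact prod_lt_prod_of_nonempty (fun _ _ => by positivity)
          (fun i hi => not_le.mp (mem_filter.mp hi).2) hne
      _ = (∏ i ∈ bad, f i) ^ #s := prod_pow _ _ _
      _ ≤ (∏ i ∈ s, f i) ^ #s := Nat.pow_le_pow_left (prod_le_prod_of_subset_of_one_le'
          (filter_subset _ s) fun i hi _ => Nat.one_le_iff_ne_zero.mpr (hf i hi)) _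
    have := this.trans_le (Nat.pow_le_pow_left hprod _)
    rw [← pow_mul] at this
    exact this.not_ge (Nat.pow_le_pow_right hB hle)
  have : #{i ∈ s | f i ^ #s ≤ B ^ 2} + #bad = #s := card_filter_add_card_filter_not _
  omega

lemma le_sq_mul_exp_of_pow_le {s H P : ℕ} (hH : H ≠ 0)
    (h : s ^ H ≤ (H.factorial * 4 ^ P) ^ 2) : (s : ℝ) ≤ H ^ 2 * Real.exp (6 * P / H) := by
  have h4 : (4 : ℝ) ≤ Real.exp 3 := by linarith [Real.add_one_le_exp 3]
  refine le_of_pow_le_pow_left₀ hH (by positivity) ?_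
  calc (s : ℝ) ^ H ≤ ((H.factorial : ℝ) * 4 ^ P) ^ 2 := by exact_mod_cast h
    _ ≤ ((H : ℝ) ^ H * Real.exp 3 ^ P) ^ 2 := by
      gcongr
      exact_mod_cast H.factorial_le_pow
    _ = ((H : ℝ) ^ 2 * Real.exp (6 * P / H)) ^ H := by
      rw [mul_pow, mul_pow, ← pow_mul, ← pow_mul, ← Real.exp_nat_mul, ← Real.exp_nat_mul]
      field_simp
      push_cast
      ring_nf

lemma le_six_mul_exp_mul_rpow_of_pow_le {s H P : ℕ} (hH : H ≠ 0)
    (h : s ^ H ≤ (H.factorial * 4 ^ P) ^ 2) :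
    (s : ℝ) ≤ 6 * Real.exp (6 * P / H) * (H : ℝ) ^ (6 : ℝ) := by
  have hH1 : (1 : ℝ) ≤ H := by exact_mod_cast Nat.one_le_iff_ne_zero.mpr hH
  calc (s : ℝ) ≤ H ^ 2 * Real.exp (6 * P / H) := le_sq_mul_exp_of_pow_le hH h
    _ ≤ 6 * (H : ℝ) ^ 6 * Real.exp (6 * P / H) := by
      gcongr
      nlinarith [pow_le_pow_right₀ hH1 (show 2 ≤ 6 by norm_num),
        pow_nonneg (zero_le_one.trans hH1) 6]
    _ = 6 * Real.exp (6 * P / H) * (H : ℝ) ^ (6 : ℝ) := by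
      rw [show (6 : ℝ) = (6 : ℕ) by norm_num, Real.rpow_natCast]
      ring

theorem stmt_14 :
    ∃ C : ℝ, 0 < C ∧ ∀ N H a : ℕ, 1 < H → 1 ≤ a → a < N →
      sqfreePart (intervalProd N H) = sqfreePart (Nat.factorial a) →
      ∃ a₁ a₂ n₁ n₂ h : ℕ,
        NatSmooth (max a H) a₁ ∧ NatSmooth (max a H) a₂ ∧
        (a₁ : ℝ) ≤ C * Real.exp (C * (max a H : ℝ) / (H : ℝ)) * (H : ℝ) ^ C ∧
        (a₂ : ℝ) ≤ C * Real.exp (C * (max a H : ℝ) / (H : ℝ)) * (H : ℝ) ^ C ∧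
        1 ≤ h ∧ h ≤ H ∧
        N + 1 ≤ a₁ * n₁ ^ 2 ∧ a₁ * n₁ ^ 2 ≤ N + H ∧
        N + 1 ≤ a₂ * n₂ ^ 2 ∧ a₂ * n₂ ^ 2 ≤ N + H ∧
        a₁ * n₁ ^ 2 + h = a₂ * n₂ ^ 2 := by
  refine ⟨6, by norm_num, fun N H a hH _ _ heq => ?_⟩
  have hsmooth (n) (hn : n ∈ Ioc N (N + H)) := natSmooth_sqfreePart_of_mem_Ioc heq hn
  have hprod : ∏ n ∈ Ioc N (N + H), sqfreePart n ≤ H.factorial * 4 ^ max a H :=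
    (Nat.le_of_dvd (Nat.mul_pos H.factorial_pos (primorial_pos _))
      (prod_sqfreePart_Ioc_dvd hsmooth)).trans (Nat.mul_le_mul_left _ (primorial_le_four_pow _))
  set good := {n ∈ Ioc N (N + H) | sqfreePart n ^ H ≤ (H.factorial * 4 ^ max a H) ^ 2}
  have hgood : 2 ≤ #good := by
    simpa using two_le_card_filter_pow_card_le_sq _ _ (by rw [Nat.card_Ioc]; omega)
      (fun n _ => sqfreePart_ne_zero n) hprod
  obtain ⟨n₁, h₁, n₂, h₂, hlt⟩ : ∃ n₁ ∈ good, ∃ n₂ ∈ good, n₁ < n₂ :=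
    ⟨_, min'_mem _ _, _, max'_mem _ _, min'_lt_max'_of_card _ hgood⟩
  obtain ⟨hn₁, hb₁⟩ := mem_filter.mp h₁
  obtain ⟨hn₂, hb₂⟩ := mem_filter.mp h₂
  have := mem_Ioc.mp hn₁
  have := mem_Ioc.mp hn₂
  obtain ⟨m₁, hm₁⟩ := exists_eq_sqfreePart_mul_sq (n := n₁) (by omega)
  obtain ⟨m₂, hm₂⟩ := exists_eq_sqfreePart_mul_sq (n := n₂) (by omega)
  refine ⟨_, _, m₁, m₂, n₂ - n₁, hsmooth _ hn₁, hsmooth _ hn₂, ?_, ?_, ?_⟩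
  · rw [← Nat.cast_max]; exact le_six_mul_exp_mul_rpow_of_pow_le (by omega) hb₁
  · rw [← Nat.cast_max]; exact le_six_mul_exp_mul_rpow_of_pow_le (by omega) hb₂
  · rw [← hm₁, ← hm₂]; omega
end

section
/- Let 𝒬 be a finite collection of pairwise coprime positive integers, and let f : ℕ → ℂ be finitely supported. Suppose that for each q ∈ 𝒬 there is a set S_q of ω(q) residue classes modulo q, with 0 ≤ ω(q) < q, such that f(n) = 0 whenever n mod q lies in S_q. Then for any distinct q₁,…,q_k ∈ 𝒬, ∑_{a mod q₁⋯q_k, with q_j ∤ a for all j=1,…,k} |∑_n f(n)·e(−a·n/(q₁⋯q_k))|² ≥ (∏_{j=1}^k ω(q_j)/(q_j−ω(q_j))) · |∑_n f(n)|², where e(θ) := e^{2πiθ}. -/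
/-!
For one modulus `q`, let `c b` be the mass of `g` on the residue class `b`. Parseval on `ZMod q`
gives `∑_{x ≠ 0} |ĝ x|² = q ∑_b |c b|² - |∑_b c b|²`, while Cauchy–Schwarz over the at most
`q - ω(q)` classes outside `S_q` gives `|∑_b c b|² ≤ (q - ω(q)) ∑_b |c b|²`; together they bound
the left side below by `ω(q) / (q - ω(q)) |∑ g|²`.

For several moduli, induct on `T`: by the Chinese remainder theorem every residue modulo `q N` is
`x N + y q` with `x` mod `q` and `y` mod `N`, and
`e(-(x N + y q) n / (q N)) = e(-x n / q) e(-y n / N)`.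
Applying the one-modulus bound to the twist `n ↦ f n e(-y n / N)`, which still vanishes on `S_q`,
peels off the factor of `q`.
-/

open Finset ZMod
open scoped ComplexConjugate

namespace ZMod

variable {N : ℕ} [NeZero N]

lemma conj_stdAddChar (j : ZMod N) : conj (stdAddChar j) = stdAddChar (-j) := by
  rw [stdAddChar_apply, stdAddChar_apply, AddChar.map_neg_eq_inv, Circle.coe_inv_eq_conj]

lemma sum_norm_dft_sq (Φ : ZMod N → ℂ) : ∑ k, ‖𝓕 Φ k‖ ^ 2 = N * ∑ j, ‖Φ j‖ ^ 2 := by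
  have h : ∑ k, 𝓕 Φ k * conj (𝓕 Φ k) = N * ∑ j, Φ j * conj (Φ j) := by
    have hinv : ∀ j, ∑ k, stdAddChar (k * j) * 𝓕 Φ k = N * Φ j := fun j => by
      have := invDFT_apply (𝓕 Φ) j
      rw [LinearEquiv.symm_apply_apply] at this
      simp only [smul_eq_mul] at this
      rw [this, ← mul_assoc, mul_inv_cancel₀ (NeZero.ne _), one_mul]
    calc ∑ k, 𝓕 Φ k * conj (𝓕 Φ k)
        = ∑ j, Φ j * conj (∑ k, stdAddChar (k * j) * 𝓕 Φ k) := by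
          simp only [map_sum, map_mul, conj_stdAddChar, mul_sum]
          rw [sum_comm]
          refine sum_congr rfl fun k _ => ?_
          simp only [dft_apply, smul_eq_mul, sum_mul]
          exact sum_congr rfl fun j _ => by ring_nf
      _ = N * ∑ j, Φ j * conj (Φ j) := by
          simp only [hinv, map_mul, map_natCast, mul_sum]
          exact sum_congr rfl fun j _ => by ring
  simp only [RCLike.mul_conj] at h
  exact Complex.ofReal_injective (by push_cast; exact h)

lemma stdAddChar_intCast_mul_of_eq {q M m : ℕ} [NeZero q] [NeZero M] (hM : M = q * m) (k : ℤ) :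
    stdAddChar ((k * m : ℤ) : ZMod M) = stdAddChar (k : ZMod q) := by
  have hm : (m : ℂ) ≠ 0 := by
    rintro h; exact NeZero.ne M (by rw [hM, Nat.cast_eq_zero.1 h, mul_zero])
  rw [stdAddChar_coe, stdAddChar_coe, hM]
  congr 1
  push_cast
  field_simp

end ZMod

lemma norm_sum_sq_le_card_mul_sum_norm_sq {ι E : Type*} [SeminormedAddCommGroup E]
    (s : Finset ι) (c : ι → E) : ‖∑ i ∈ s, c i‖ ^ 2 ≤ #s * ∑ i ∈ s, ‖c i‖ ^ 2 :=
  (pow_le_pow_left₀ (norm_nonneg _) (norm_sum_le s c) 2).trans sq_sum_le_card_mul_sum_sq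

lemma norm_sum_sq_le_card_sub_mul_sum_norm_sq {ι E : Type*} [Fintype ι] [DecidableEq ι]
    [SeminormedAddCommGroup E] (S : Finset ι) (c : ι → E) (hc : ∀ i ∈ S, c i = 0) :
    ‖∑ i, c i‖ ^ 2 ≤ (Fintype.card ι - #S : ℝ) * ∑ i, ‖c i‖ ^ 2 := by
  have hcard : (#Sᶜ : ℝ) = Fintype.card ι - #S := by
    rw [card_compl, Nat.cast_sub (card_le_univ S)]
  calc ‖∑ i, c i‖ ^ 2 = ‖∑ i ∈ Sᶜ, c i‖ ^ 2 := by
        rw [← sum_add_sum_compl S, sum_eq_zero hc, zero_add]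
    _ ≤ #Sᶜ * ∑ i ∈ Sᶜ, ‖c i‖ ^ 2 := norm_sum_sq_le_card_mul_sum_norm_sq _ _
    _ ≤ (Fintype.card ι - #S : ℝ) * ∑ i, ‖c i‖ ^ 2 := by
        rw [← hcard]
        gcongr
        exact subset_univ _

lemma card_div_mul_norm_sum_sq_le_sum_norm_dft_sq {q : ℕ} [NeZero q] (S : Finset (ZMod q))
    (hS : #S < q) (c : ZMod q → ℂ) (hc : ∀ b ∈ S, c b = 0) :
    #S / (q - #S : ℝ) * ‖∑ b, c b‖ ^ 2 ≤ ∑ x ∈ univ.erase 0, ‖𝓕 c x‖ ^ 2 := by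
  have hpos : (0 : ℝ) < q - #S := sub_pos.2 (by exact_mod_cast hS)
  have hsplit : ∑ x ∈ univ.erase 0, ‖𝓕 c x‖ ^ 2 = q * ∑ b, ‖c b‖ ^ 2 - ‖∑ b, c b‖ ^ 2 := by
    rw [← sum_norm_dft_sq, ← add_sum_erase _ _ (mem_univ 0), dft_apply_zero, add_sub_cancel_left]
  rw [hsplit, div_mul_eq_mul_div, div_le_iff₀ hpos]
  nlinarith [ZMod.card q ▸ norm_sum_sq_le_card_sub_mul_sum_norm_sq S c hc]

noncomputable def expSum (N : ℕ) [NeZero N] (A : Finset ℕ) (g : ℕ → ℂ) (x : ZMod N) : ℂ :=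
  ∑ n ∈ A, g n * stdAddChar (-(x * (n : ZMod N)))

lemma expSum_eq_dft {N : ℕ} [NeZero N] (A : Finset ℕ) (g : ℕ → ℂ) (x : ZMod N) :
    expSum N A g x = 𝓕 (fun b => ∑ n ∈ A with ((n : ℕ) : ZMod N) = b, g n) x := by
  rw [expSum, dft_apply, ← sum_fiberwise A (fun n => (n : ZMod N))]
  refine sum_congr rfl fun b _ => ?_
  rw [smul_eq_mul, mul_sum]
  refine sum_congr rfl fun n hn => ?_
  rw [(mem_filter.1 hn).2, mul_comm, mul_comm x]

lemma card_div_mul_norm_sum_sq_le_sum_norm_expSum_sq {q : ℕ} [NeZero q] (S : Finset (ZMod q))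
    (hS : #S < q) (A : Finset ℕ) (g : ℕ → ℂ) (hg : ∀ n : ℕ, (n : ZMod q) ∈ S → g n = 0) :
    #S / (q - #S : ℝ) * ‖∑ n ∈ A, g n‖ ^ 2 ≤ ∑ x ∈ univ.erase 0, ‖expSum q A g x‖ ^ 2 := by
  simp only [expSum_eq_dft]
  rw [← sum_fiberwise A (fun n => (n : ZMod q))]
  refine card_div_mul_norm_sum_sq_le_sum_norm_dft_sq S hS _ fun b hb => sum_eq_zero fun n hn => ?_
  exact hg n ((mem_filter.1 hn).2 ▸ hb)

def crtMap (q N : ℕ) (p : ZMod q × ZMod N) : ZMod (q * N) := (p.1.val * N + p.2.val * q : ℕ)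

section Crt

variable {q N : ℕ}

lemma cast_crtMap_of_dvd_left [NeZero q] {d : ℕ} (hd : d ∣ q) (p : ZMod q × ZMod N) :
    (cast (crtMap q N p) : ZMod d) = cast p.1 * N := by
  rw [crtMap, cast_natCast (hd.mul_right N)]
  push_cast
  rw [(natCast_eq_zero_iff q d).2 hd, mul_zero, add_zero, natCast_val]

lemma cast_crtMap_of_dvd_right [NeZero N] {d : ℕ} (hd : d ∣ N) (p : ZMod q × ZMod N) :
    (cast (crtMap q N p) : ZMod d) = cast p.2 * q := by
  rw [crtMap, cast_natCast (hd.mul_left q)]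
  push_cast
  rw [(natCast_eq_zero_iff N d).2 hd, mul_zero, zero_add, natCast_val]

lemma crtMap_bijective [NeZero q] [NeZero N] (h : q.Coprime N) :
    Function.Bijective (crtMap q N) := by
  refine (Fintype.bijective_iff_injective_and_card _).2 ⟨fun p p' hpp' => ?_, by simp [ZMod.card]⟩
  have h₁ := congrArg (cast · : ZMod (q * N) → ZMod q) hpp'
  have h₂ := congrArg (cast · : ZMod (q * N) → ZMod N) hpp'
  simp only [cast_crtMap_of_dvd_left dvd_rfl, cast_crtMap_of_dvd_right dvd_rfl, cast_id', id]
    at h₁ h₂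
  exact Prod.ext (((isUnit_iff_coprime N q).2 h.symm).mul_left_injective h₁)
    (((isUnit_iff_coprime q N).2 h).mul_left_injective h₂)

lemma expSum_crtMap [NeZero q] [NeZero N] (A : Finset ℕ) (f : ℕ → ℂ) (p : ZMod q × ZMod N) :
    expSum (q * N) A f (crtMap q N p) =
      expSum q A (fun n => f n * stdAddChar (-(p.2 * (n : ZMod N)))) p.1 := by
  refine sum_congr rfl fun n _ => ?_
  have hsplit : -(crtMap q N p * n) =
      ((-(p.1.val * n : ℤ) * N : ℤ) : ZMod (q * N)) +
        ((-(p.2.val * n : ℤ) * q : ℤ) : ZMod (q * N)) := by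
    rw [crtMap]; push_cast; ring
  rw [hsplit, AddChar.map_add_eq_mul, stdAddChar_intCast_mul_of_eq rfl,
    stdAddChar_intCast_mul_of_eq (mul_comm q N)]
  push_cast
  simp only [natCast_zmod_val]
  ring

noncomputable def residuesNonzeroMod (T : Finset ℕ) (N : ℕ) [NeZero N] : Finset (ZMod N) :=
  {x | ∀ q ∈ T, (cast x : ZMod q) ≠ 0}

lemma crtMap_mem_residuesNonzeroMod_insert_iff [NeZero q] [NeZero N] (h : q.Coprime N)
    {T : Finset ℕ} (hT : ∀ d ∈ T, d ∣ N) (p : ZMod q × ZMod N) :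
    crtMap q N p ∈ residuesNonzeroMod (insert q T) (q * N) ↔
      p.1 ≠ 0 ∧ p.2 ∈ residuesNonzeroMod T N := by
  simp only [residuesNonzeroMod, mem_filter, mem_univ, true_and, forall_mem_insert,
    cast_crtMap_of_dvd_left dvd_rfl, cast_id', id]
  refine and_congr ((isUnit_iff_coprime N q).2 h.symm).mul_left_eq_zero.not <|
    forall₂_congr fun d hd => ?_
  rw [cast_crtMap_of_dvd_right (hT d hd)]
  exact ((isUnit_iff_coprime q d).2 (h.coprime_dvd_right (hT d hd))).mul_left_eq_zero.not

lemma sum_residuesNonzeroMod_insert [NeZero q] [NeZero N] (h : q.Coprime N)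
    {T : Finset ℕ} (hT : ∀ d ∈ T, d ∣ N) (F : ZMod (q * N) → ℝ) :
    ∑ x ∈ residuesNonzeroMod (insert q T) (q * N), F x =
      ∑ y ∈ residuesNonzeroMod T N, ∑ x ∈ univ.erase 0, F (crtMap q N (x, y)) := by
  rw [← sum_product_right (f := fun p => F (crtMap q N p))]
  refine (sum_nbij (crtMap q N) (fun p hp => ?_) ((crtMap_bijective h).injective.injOn)
    (fun x hx => ?_) fun _ _ => rfl).symm
  · rw [crtMap_mem_residuesNonzeroMod_insert_iff h hT]
    simpa [and_comm] using hp
  · obtain ⟨p, rfl⟩ := (crtMap_bijective h).surjective x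
    refine ⟨p, ?_, rfl⟩
    rw [mem_coe, crtMap_mem_residuesNonzeroMod_insert_iff h hT] at hx
    simpa [and_comm] using hx

end Crt

theorem prod_card_div_mul_norm_sum_sq_le {T : Finset ℕ}
    (hcop : (T : Set ℕ).Pairwise Nat.Coprime) (S : (q : ℕ) → Finset (ZMod q))
    (hS : ∀ q ∈ T, #(S q) < q) (A : Finset ℕ) (f : ℕ → ℂ)
    (hf : ∀ q ∈ T, ∀ n : ℕ, (n : ZMod q) ∈ S q → f n = 0) (N : ℕ) [NeZero N]
    (hN : ∏ q ∈ T, q = N) :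
    (∏ q ∈ T, (#(S q) : ℝ) / (q - #(S q))) * ‖∑ n ∈ A, f n‖ ^ 2 ≤
      ∑ x ∈ residuesNonzeroMod T N, ‖expSum N A f x‖ ^ 2 := by
  induction T using Finset.induction_on generalizing N with
  | empty =>
    rw [prod_empty] at hN
    subst hN
    simp [residuesNonzeroMod, expSum, Subsingleton.elim _ (0 : ZMod 1)]
  | @insert q T hqT ih =>
    rw [prod_insert hqT] at hN
    generalize hN₀ : ∏ d ∈ T, d = N₀ at hN
    subst hN
    have : NeZero q := ⟨left_ne_zero_of_mul (NeZero.ne (q * N₀))⟩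
    have : NeZero N₀ := ⟨right_ne_zero_of_mul (NeZero.ne (q * N₀))⟩
    have hq : q ∈ insert q T := mem_insert_self q T
    have hcopT : q.Coprime N₀ := hN₀ ▸ Nat.Coprime.prod_right fun d hd =>
      hcop hq (mem_insert_of_mem hd) (ne_of_mem_of_not_mem hd hqT).symm
    have hratio : (0 : ℝ) ≤ #(S q) / (q - #(S q)) :=
      div_nonneg (Nat.cast_nonneg _) (sub_nonneg.2 (by exact_mod_cast (hS q hq).le))
    have ihT := ih (hcop.mono (by simp)) (fun d hd => hS d (mem_insert_of_mem hd))
      (fun d hd => hf d (mem_insert_of_mem hd)) N₀ hN₀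
    rw [prod_insert hqT, mul_assoc,
      sum_residuesNonzeroMod_insert hcopT fun d hd => hN₀ ▸ dvd_prod_of_mem _ hd]
    refine (mul_le_mul_of_nonneg_left ihT hratio).trans ?_
    rw [mul_sum]
    refine sum_le_sum fun y _ => ?_
    simp only [expSum_crtMap]
    exact card_div_mul_norm_sum_sq_le_sum_norm_expSum_sq _ (hS q hq) _ _
      fun n hn => by rw [hf q hq n hn, zero_mul]

lemma natCast_mem_residuesNonzeroMod_iff {T : Finset ℕ} {N : ℕ} [NeZero N]
    (hT : ∀ q ∈ T, q ∣ N) (a : ℕ) :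
    (a : ZMod N) ∈ residuesNonzeroMod T N ↔ ∀ q ∈ T, ¬ q ∣ a := by
  simp only [residuesNonzeroMod, mem_filter, mem_univ, true_and]
  exact forall₂_congr fun q hq => by rw [cast_natCast (hT q hq), Ne, natCast_eq_zero_iff]

lemma sum_range_filter_eq_sum_residuesNonzeroMod {T : Finset ℕ} {N : ℕ} [NeZero N]
    (hT : ∀ q ∈ T, q ∣ N) (F : ZMod N → ℝ) :
    ∑ a ∈ range N with ∀ q ∈ T, ¬ q ∣ a, F a = ∑ x ∈ residuesNonzeroMod T N, F x := by
  refine sum_nbij' (fun a => (a : ZMod N)) ZMod.val (fun a ha => ?_) (fun x hx => ?_)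
    (fun a ha => val_cast_of_lt (mem_range.1 (mem_filter.1 ha).1)) (fun x _ => natCast_zmod_val x)
    fun _ _ => rfl
  · exact (natCast_mem_residuesNonzeroMod_iff hT a).2 (mem_filter.1 ha).2
  · rw [← natCast_zmod_val x, natCast_mem_residuesNonzeroMod_iff hT] at hx
    exact mem_filter.2 ⟨mem_range.2 (val_lt x), hx⟩

lemma cexp_neg_mul_div_eq_stdAddChar (N : ℕ) [NeZero N] (a n : ℕ) :
    Complex.exp (2 * Real.pi * Complex.I * (-((a : ℂ) * n / N))) =
      stdAddChar (-((a : ZMod N) * (n : ZMod N))) := by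
  rw [show -((a : ZMod N) * (n : ZMod N)) = ((-(a * n : ℤ) : ℤ) : ZMod N) by push_cast; ring,
    stdAddChar_coe]
  push_cast
  ring_nf

theorem stmt_17 (Q : Finset ℕ) (hQpos : ∀ q ∈ Q, 0 < q)
    (hQcop : ∀ q ∈ Q, ∀ q' ∈ Q, q ≠ q' → Nat.Coprime q q')
    (f : ℕ → ℂ) (hf : (Function.support f).Finite)
    (ω : ℕ → ℕ) (S : (q : ℕ) → Finset (ZMod q))
    (hScard : ∀ q ∈ Q, (S q).card = ω q)
    (hω : ∀ q ∈ Q, ω q < q)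
    (hvanish : ∀ q ∈ Q, ∀ n : ℕ, (n : ZMod q) ∈ S q → f n = 0)
    (T : Finset ℕ) (hT : T ⊆ Q) :
    (∏ q ∈ T, (ω q : ℝ) / ((q : ℝ) - (ω q : ℝ))) * ‖∑' n : ℕ, f n‖ ^ 2 ≤
      ∑ a ∈ (Finset.range (∏ q ∈ T, q)).filter (fun a => ∀ q ∈ T, ¬ q ∣ a),
        ‖∑' n : ℕ,
          f n * Complex.exp (2 * Real.pi * Complex.I *
            (-((a : ℂ) * (n : ℂ) / ((∏ q ∈ T, q : ℕ) : ℂ))))‖ ^ 2 := by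
  have : NeZero (∏ q ∈ T, q) := ⟨prod_ne_zero_iff.2 fun q hq => (hQpos q (hT hq)).ne'⟩
  have hsupp : ∀ n ∉ hf.toFinset, f n = 0 := fun n hn => by simpa using hn
  have hexpSum : ∀ a : ℕ, ∑' n : ℕ, f n * Complex.exp (2 * Real.pi * Complex.I *
      (-((a : ℂ) * (n : ℂ) / ((∏ q ∈ T, q : ℕ) : ℂ)))) =
        expSum _ hf.toFinset f (a : ZMod (∏ q ∈ T, q)) := fun a => by
    rw [tsum_eq_sum fun n hn => by rw [hsupp n hn, zero_mul]]
    exact sum_congr rfl fun n _ => by rw [cexp_neg_mul_div_eq_stdAddChar]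
  have hprod : ∏ q ∈ T, (ω q : ℝ) / (q - ω q) = ∏ q ∈ T, (#(S q) : ℝ) / (q - #(S q)) :=
    prod_congr rfl fun q hq => by rw [hScard q (hT hq)]
  simp only [hexpSum, tsum_eq_sum hsupp, hprod]
  rw [sum_range_filter_eq_sum_residuesNonzeroMod (fun q hq => dvd_prod_of_mem _ hq)
    (fun x => ‖expSum _ hf.toFinset f x‖ ^ 2)]
  exact prod_card_div_mul_norm_sum_sq_le (fun q hq q' hq' => hQcop q (hT hq) q' (hT hq')) S
    (fun q hq => hScard q (hT hq) ▸ hω q (hT hq)) _ f (fun q hq => hvanish q (hT hq)) _ rfl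
end
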